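/- arXiv:2409.13087 — 3 statements merged into one kernel-verified Lean document; each statement's English description precedes it below -/
import Mathlib

section
/- For every integer n ≥ 2, D_n = h_4(n); that is, the excess of the number of binary n-sequences with negative score over those with positive score equals the number of binary n-sequences ending in 1 with score −1. -/
/-!
Appending a bit to a sequence ending in tails leaves its score unchanged, while appending to one
ending in heads moves it by `±1`. As `sign (s + 1) + sign (s - 1) = 2 sign s` except at
`s = ±1`, this gives `D (n + 1) = 2 D n - H n (-1) + H n 1`, where `H n s` counts the sequences
ending in heads with score `s`, so that `h₄ = H · (-1)`. Hence, as soon as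
`H (n + 1) (-1) = H n (-1) + H n 1`, the difference `D n - h₄ n` doubles at each step, and it
vanishes for `n = 1`. That identity already holds after refining by the numbers of `(1,1)`- and
`(1,0)`-pairs, where the counts are products of binomial coefficients and it becomes Pascal's
rule.
-/

/-- The score of a binary sequence `x` of length `n` (indices `0,…,n-1`, with `true` = heads = 1
and `false` = tails = 0): the number of consecutive pairs `(1,1)` minus the number of
consecutive pairs `(1,0)`. -/
def scoreSeq (n : ℕ) (x : Fin n → Bool) : ℤ :=
  ((Finset.univ.filter fun i : Fin (n - 1) =>
      x ⟨i.val, by have := i.isLt; omega⟩ = true ∧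
      x ⟨i.val + 1, by have := i.isLt; omega⟩ = true).card : ℤ) -
  ((Finset.univ.filter fun i : Fin (n - 1) =>
      x ⟨i.val, by have := i.isLt; omega⟩ = true ∧
      x ⟨i.val + 1, by have := i.isLt; omega⟩ = false).card : ℤ)

/-- `Dn n` : the number of binary `n`-sequences with negative score minus the number
with positive score. -/
def Dn (n : ℕ) : ℤ :=
  ((Finset.univ.filter fun x : Fin n → Bool => scoreSeq n x < 0).card : ℤ) -
  ((Finset.univ.filter fun x : Fin n → Bool => 0 < scoreSeq n x).card : ℤ)

/-- `Hcnt n s` : the number of binary `n`-sequences ending in 1 (heads) with score `s`. -/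
def Hcnt (n : ℕ) (s : ℤ) : ℕ :=
  (Finset.univ.filter fun x : Fin n → Bool =>
    (∀ i : Fin n, (i : ℕ) = n - 1 → x i = true) ∧ scoreSeq n x = s).card

/-- `h4 n` : the number of binary `n`-sequences ending in 1 with score `-1`
(heady close-call wins for Bob). -/
def h4 (n : ℕ) : ℕ := Hcnt n (-1)

open Finset

def pairCount (k : ℕ) (a b : Bool) (x : Fin (k + 1) → Bool) : ℕ :=
  #{i : Fin k | x i.castSucc = a ∧ x i.succ = b}

lemma scoreSeq_succ (k : ℕ) (x : Fin (k + 1) → Bool) :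
    scoreSeq (k + 1) x = (pairCount k true true x : ℤ) - pairCount k true false x :=
  rfl

lemma pairCount_le (k : ℕ) (a b : Bool) (x : Fin (k + 1) → Bool) : pairCount k a b x ≤ k :=
  (card_filter_le _ _).trans_eq (card_fin k)

lemma pairCount_snoc (k : ℕ) (a b : Bool) (y : Fin (k + 1) → Bool) (c : Bool) :
    pairCount (k + 1) a b (Fin.snoc y c) =
      pairCount k a b y + if y (Fin.last k) = a ∧ c = b then 1 else 0 := by
  simp only [pairCount, card_filter, Fin.sum_univ_castSucc, Fin.succ_castSucc, Fin.snoc_castSucc,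
    Fin.succ_last, Fin.snoc_last]

lemma scoreSeq_snoc (k : ℕ) (y : Fin (k + 1) → Bool) (c : Bool) :
    scoreSeq (k + 2) (Fin.snoc y c) =
      scoreSeq (k + 1) y + if y (Fin.last k) then (if c then 1 else -1) else 0 := by
  rw [scoreSeq_succ (k + 1), scoreSeq_succ k, pairCount_snoc, pairCount_snoc]
  cases y (Fin.last k) <;> cases c <;>
    simp only [Bool.false_eq_true, Bool.true_eq_false, and_self, and_true, and_false, ↓reduceIte,
      add_zero, Nat.cast_add, Nat.cast_one] <;> ring

lemma sum_snoc_tuples {α M : Type*} [Fintype α] [AddCommMonoid M] {k : ℕ}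
    (f : (Fin (k + 1) → α) → M) :
    ∑ x, f x = ∑ y : Fin k → α, ∑ c, f (Fin.snoc y c) := by
  rw [← (Fin.snocEquiv fun _ => α).sum_comp, Fintype.sum_prod_type_right]
  rfl

lemma Dn_eq_neg_sum_sign (n : ℕ) : Dn n = -∑ x : Fin n → Bool, (scoreSeq n x).sign := by
  rw [Dn, natCast_card_filter, natCast_card_filter, ← sum_sub_distrib, ← sum_neg_distrib]
  refine sum_congr rfl fun x _ => ?_
  obtain h | h | h := lt_trichotomy (scoreSeq n x) 0
  · simp [h, h.not_gt, Int.sign_eq_neg_one_of_neg h]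
  · simp [h]
  · simp [h, h.not_gt, Int.sign_eq_one_of_pos h]

lemma Int.sign_add_one_add_sign_sub_one (s : ℤ) :
    (s + 1).sign + (s - 1).sign =
      2 * s.sign + (if s = -1 then 1 else 0) - if s = 1 then 1 else 0 := by
  obtain h | rfl | rfl | rfl | h : s < -1 ∨ s = -1 ∨ s = 0 ∨ s = 1 ∨ 1 < s := by omega
  · rw [Int.sign_eq_neg_one_of_neg (by omega), Int.sign_eq_neg_one_of_neg (by omega),
      Int.sign_eq_neg_one_of_neg (by omega), if_neg (by omega), if_neg (by omega)]
    rfl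
  · decide
  · decide
  · decide
  · rw [Int.sign_eq_one_of_pos (by omega), Int.sign_eq_one_of_pos (by omega),
      Int.sign_eq_one_of_pos (by omega), if_neg (by omega), if_neg (by omega)]
    rfl

lemma Hcnt_succ (k : ℕ) (s : ℤ) :
    Hcnt (k + 1) s =
      #{x : Fin (k + 1) → Bool | x (Fin.last k) = true ∧ scoreSeq (k + 1) x = s} := by
  refine congrArg card (filter_congr fun x _ => ?_)
  refine and_congr_left fun _ => ⟨fun h => h _ (Fin.val_last k), ?_⟩
  rintro h i hi
  rwa [show i = Fin.last k from Fin.ext (by simpa using hi)]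

lemma Dn_succ_succ (k : ℕ) :
    Dn (k + 2) = 2 * Dn (k + 1) - Hcnt (k + 1) (-1) + Hcnt (k + 1) 1 := by
  have step (y : Fin (k + 1) → Bool) :
      ∑ c, (scoreSeq (k + 2) (Fin.snoc y c)).sign =
        2 * (scoreSeq (k + 1) y).sign
          + (if y (Fin.last k) = true ∧ scoreSeq (k + 1) y = -1 then 1 else 0)
          - if y (Fin.last k) = true ∧ scoreSeq (k + 1) y = 1 then 1 else 0 := by
    simp only [Fintype.sum_bool, scoreSeq_snoc]
    cases y (Fin.last k)
    · simp [two_mul]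
    · simpa [← sub_eq_add_neg] using Int.sign_add_one_add_sign_sub_one _
  rw [Dn_eq_neg_sum_sign, Dn_eq_neg_sum_sign, sum_snoc_tuples, sum_congr rfl fun y _ => step y,
    Hcnt_succ, Hcnt_succ, natCast_card_filter, natCast_card_filter, sum_sub_distrib,
    sum_add_distrib, ← mul_sum]
  ring

def countEnding (k : ℕ) (b : Bool) (p q : ℕ) : ℕ :=
  #{x : Fin (k + 1) → Bool |
    x (Fin.last k) = b ∧ pairCount k true true x = p ∧ pairCount k true false x = q}

lemma countEnding_zero (b : Bool) (p q : ℕ) :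
    countEnding 0 b p q = if p = 0 ∧ q = 0 then 1 else 0 := by
  simp only [countEnding, pairCount, univ_eq_empty, filter_empty, card_empty]
  split_ifs with h
  · obtain ⟨rfl, rfl⟩ := h
    cases b <;> decide
  · simp only [card_eq_zero, filter_eq_empty_iff]
    omega

lemma card_filter_snoc {α : Type*} [Fintype α] {k : ℕ} (P : (Fin (k + 1) → α) → Prop)
    [DecidablePred P] :
    #{x | P x} = ∑ y : Fin k → α, ∑ c, if P (Fin.snoc y c) then 1 else 0 := by
  rw [card_filter, sum_snoc_tuples]

lemma countEnding_succ_true_succ (k p q : ℕ) :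
    countEnding (k + 1) true (p + 1) q =
      countEnding k true p q + countEnding k false (p + 1) q := by
  rw [countEnding, card_filter_snoc, countEnding, countEnding, card_filter, card_filter,
    ← sum_add_distrib]
  refine sum_congr rfl fun y _ => ?_
  simp only [Fintype.sum_bool, Fin.snoc_last, pairCount_snoc]
  cases y (Fin.last k) <;> simp

lemma countEnding_succ_true_zero (k q : ℕ) :
    countEnding (k + 1) true 0 q = countEnding k false 0 q := by
  rw [countEnding, card_filter_snoc, countEnding, card_filter]
  refine sum_congr rfl fun y _ => ?_
  simp only [Fintype.sum_bool, Fin.snoc_last, pairCount_snoc]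
  cases y (Fin.last k) <;> simp

lemma countEnding_succ_false_succ (k p q : ℕ) :
    countEnding (k + 1) false p (q + 1) =
      countEnding k true p q + countEnding k false p (q + 1) := by
  rw [countEnding, card_filter_snoc, countEnding, countEnding, card_filter, card_filter,
    ← sum_add_distrib]
  refine sum_congr rfl fun y _ => ?_
  simp only [Fintype.sum_bool, Fin.snoc_last, pairCount_snoc]
  cases y (Fin.last k) <;> simp

lemma countEnding_succ_false_zero (k p : ℕ) :
    countEnding (k + 1) false p 0 = countEnding k false p 0 := by
  rw [countEnding, card_filter_snoc, countEnding, card_filter]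
  refine sum_congr rfl fun y _ => ?_
  simp only [Fintype.sum_bool, Fin.snoc_last, pairCount_snoc]
  cases y (Fin.last k) <;> simp

/- Where the formula comes from: the `p + q + 1` heads form `q + 1` runs, in `(p + q).choose q`
ways, and the remaining tails fill the gaps before, between and (when ending in tails) after the
runs, all of them nonempty except the first. The guard is needed only for `q = 0`, where the
truncated subtraction `k - (p + q)` would not make the second factor vanish. -/
def countEndingFormula : Bool → ℕ → ℕ → ℕ → ℕ
  | true, k, p, q => if p + q ≤ k then (p + q).choose q * (k - (p + q)).choose q else 0
  | false, _, p, 0 => if p = 0 then 1 else 0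
  | false, k, p, q + 1 => (p + q).choose q * (k - (p + q)).choose (q + 1)

lemma countEndingFormula_zero (b : Bool) (p q : ℕ) :
    countEndingFormula b 0 p q = if p = 0 ∧ q = 0 then 1 else 0 := by
  rcases b with _ | _ <;> rcases q with _ | q <;> simp [countEndingFormula]

lemma countEndingFormula_succ_true_succ (k p q : ℕ) :
    countEndingFormula true (k + 1) (p + 1) q =
      countEndingFormula true k p q + countEndingFormula false k (p + 1) q := by
  rcases q with _ | q
  · simp [countEndingFormula]
  simp only [countEndingFormula]
  rw [show p + 1 + (q + 1) = p + q + 1 + 1 by omega, show p + (q + 1) = p + q + 1 by omega,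
    show p + 1 + q = p + q + 1 by omega, Nat.add_sub_add_right]
  by_cases h : p + q + 1 ≤ k
  · rw [if_pos (by omega), if_pos h, Nat.choose_succ_succ]
    ring
  · rw [if_neg (by omega), if_neg h, Nat.sub_eq_zero_of_le (by omega), Nat.choose_zero_succ,
      mul_zero, add_zero]

lemma countEndingFormula_succ_true_zero (k q : ℕ) :
    countEndingFormula true (k + 1) 0 q = countEndingFormula false k 0 q := by
  rcases q with _ | q
  · simp [countEndingFormula]
  simp only [countEndingFormula, zero_add, Nat.choose_self, one_mul, Nat.add_sub_add_right]
  split_ifs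
  · rfl
  · rw [Nat.sub_eq_zero_of_le (by omega), Nat.choose_zero_succ]

lemma countEndingFormula_succ_false_succ (k p q : ℕ) :
    countEndingFormula false (k + 1) p (q + 1) =
      countEndingFormula true k p q + countEndingFormula false k p (q + 1) := by
  simp only [countEndingFormula]
  by_cases h : p + q ≤ k
  · rw [if_pos h, Nat.sub_add_comm h, Nat.choose_succ_succ]
    ring
  · rw [if_neg h, Nat.sub_eq_zero_of_le (by omega), Nat.sub_eq_zero_of_le (by omega),
      Nat.choose_zero_succ, mul_zero, add_zero]

lemma countEnding_eq_formula (k : ℕ) (b : Bool) (p q : ℕ) :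
    countEnding k b p q = countEndingFormula b k p q := by
  induction k generalizing b p q with
  | zero => rw [countEnding_zero, countEndingFormula_zero]
  | succ k ih =>
    rcases b with _ | _
    · rcases q with _ | q
      · rw [countEnding_succ_false_zero, ih]
        rfl
      · rw [countEnding_succ_false_succ, ih, ih, countEndingFormula_succ_false_succ]
    · rcases p with _ | p
      · rw [countEnding_succ_true_zero, ih, countEndingFormula_succ_true_zero]
      · rw [countEnding_succ_true_succ, ih, ih, countEndingFormula_succ_true_succ]

lemma countEnding_succ_true_diag (k j : ℕ) :
    countEnding (k + 1) true j (j + 1) =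
      countEnding k true j (j + 1) + countEnding k true (j + 1) j := by
  simp only [countEnding_eq_formula, countEndingFormula]
  rw [show j + 1 + j = 2 * j + 1 by omega, show j + (j + 1) = 2 * j + 1 by omega,
    Nat.choose_symm_half]
  by_cases h : 2 * j + 1 ≤ k
  · rw [if_pos (by omega), if_pos h, if_pos h, Nat.sub_add_comm h, Nat.choose_succ_succ]
    ring
  · rw [if_neg h, if_neg h, add_zero]
    split_ifs
    · rw [Nat.sub_eq_zero_of_le (by omega), Nat.choose_zero_succ, mul_zero]
    · rfl

lemma Hcnt_succ_eq_sum (k : ℕ) (s : ℤ) :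
    Hcnt (k + 1) s = ∑ q ∈ range (k + 1), #{x : Fin (k + 1) → Bool | x (Fin.last k) = true ∧
      (pairCount k true true x : ℤ) = q + s ∧ pairCount k true false x = q} := by
  rw [Hcnt_succ, card_eq_sum_card_fiberwise (f := pairCount k true false) (t := range (k + 1))
    fun x _ => mem_range.2 (Nat.lt_succ_of_le (pairCount_le k _ _ x))]
  refine sum_congr rfl fun q _ => congrArg card ?_
  rw [filter_filter]
  refine filter_congr fun x _ => ?_
  rw [scoreSeq_succ, and_assoc]
  exact and_congr_right fun _ => by omega

lemma Hcnt_succ_one (k : ℕ) :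
    Hcnt (k + 1) 1 = ∑ q ∈ range (k + 1), countEnding k true (q + 1) q := by
  rw [Hcnt_succ_eq_sum]
  refine sum_congr rfl fun q _ => congrArg card (filter_congr fun x _ => ?_)
  exact and_congr_right fun _ => by omega

lemma Hcnt_succ_neg_one (k : ℕ) :
    Hcnt (k + 1) (-1) = ∑ j ∈ range k, countEnding k true j (j + 1) := by
  rw [Hcnt_succ_eq_sum, sum_range_succ',
    card_eq_zero.2 (filter_eq_empty_iff.2 fun x _ => by omega), add_zero]
  refine sum_congr rfl fun j _ => congrArg card (filter_congr fun x _ => ?_)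
  exact and_congr_right fun _ => by omega

lemma Hcnt_succ_succ_neg_one (k : ℕ) :
    Hcnt (k + 2) (-1) = Hcnt (k + 1) (-1) + Hcnt (k + 1) 1 := by
  rw [Hcnt_succ_neg_one, Hcnt_succ_neg_one, Hcnt_succ_one,
    sum_congr rfl fun j _ => countEnding_succ_true_diag k j, sum_add_distrib, sum_range_succ,
    countEnding_eq_formula k true k, countEndingFormula, if_neg (by omega), add_zero]

theorem D_eq_h4_general (n : ℕ) : Dn n = (h4 n : ℤ) := by
  induction n using Nat.twoStepInduction with
  | zero => decide
  | one => decide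
  | more k _ ih =>
    simp only [h4] at ih ⊢
    rw [Dn_succ_succ, ih, Hcnt_succ_succ_neg_one]
    push_cast
    ring

/-- Theorem 1(i): for every `n ≥ 2`, `D_n = h₄(n)`. -/
theorem D_eq_h4 (n : ℕ) (hn : 2 ≤ n) : Dn n = (h4 n : ℤ) :=
  D_eq_h4_general n
end

section
/- Let n ≥ 1 and let s be an integer with −⌊(n−1)/2⌋ ≤ s ≤ n−1. Then H_s(n) = Σ_{k = max(0, −s)}^{⌊(n−s−1)/3⌋} C(2k+s, k) · C(n−s−1−2k, k), where C denotes the binomial coefficient. -/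
/-!
Sort the sequences by their last symbol: with `H`, `T` the counts ending in heads and in tails,
appending one symbol gives `H_{n+1}(s) = H_n(s-1) + T_n(s)` and `T_{n+1}(s) = H_n(s+1) + T_n(s)`.
Both counts have closed forms as sums of products of two multiset coefficients. Once these are
extended by zero to negative sizes, the two recurrences become, term by term, Pascal's rule
`multichoose (k+1) j = multichoose (k+1) (j-1) + multichoose k j`, with no boundary cases.
For `s ≤ n - 1` the closed form for `H` is the stated binomial sum.
-/

open Finset

def intMultichoose (k : ℕ) (j : ℤ) : ℕ :=
  if 0 ≤ j then k.multichoose j.toNat else 0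

theorem intMultichoose_of_neg {k : ℕ} {j : ℤ} (hj : j < 0) : intMultichoose k j = 0 :=
  if_neg hj.not_ge

theorem intMultichoose_natCast (k j : ℕ) : intMultichoose k j = k.multichoose j := by
  simp [intMultichoose]

theorem intMultichoose_mul_eq_zero {a b : ℕ} {i j : ℤ} (h : i + j < 0) :
    intMultichoose a i * intMultichoose b j = 0 := by
  rcases lt_or_ge i 0 with hi | hi
  · rw [intMultichoose_of_neg hi, zero_mul]
  · rw [intMultichoose_of_neg (by omega : j < 0), mul_zero]

theorem intMultichoose_zero (j : ℤ) : intMultichoose 0 j = if j = 0 then 1 else 0 := by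
  obtain hj | rfl | hj := lt_trichotomy j 0
  · simp [intMultichoose_of_neg hj, hj.ne]
  · simp [intMultichoose, Nat.multichoose_zero_right]
  · obtain ⟨i, rfl⟩ : ∃ i : ℕ, j = (i + 1 : ℕ) := ⟨j.toNat - 1, by omega⟩
    rw [intMultichoose_natCast, Nat.multichoose_zero_succ, if_neg (by omega)]

theorem intMultichoose_one (j : ℤ) : intMultichoose 1 j = if 0 ≤ j then 1 else 0 := by
  simp [intMultichoose, Nat.multichoose_one]

theorem intMultichoose_succ (k : ℕ) (j : ℤ) :
    intMultichoose (k + 1) j = intMultichoose (k + 1) (j - 1) + intMultichoose k j := by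
  obtain hj | rfl | hj := lt_trichotomy j 0
  · simp [intMultichoose_of_neg, hj, show j - 1 < 0 by omega]
  · simp [intMultichoose, Nat.multichoose_zero_right]
  · obtain ⟨i, rfl⟩ : ∃ i : ℕ, j = (i + 1 : ℕ) := ⟨j.toNat - 1, by omega⟩
    rw [Nat.cast_succ, add_sub_cancel_right, ← Nat.cast_succ, intMultichoose_natCast,
      intMultichoose_natCast, intMultichoose_natCast, Nat.multichoose_succ_succ, add_comm]

theorem intMultichoose_succ_eq_choose (k : ℕ) {j : ℤ} (hj : 0 ≤ j) :
    intMultichoose (k + 1) j = (k + j).toNat.choose k := by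
  lift j to ℕ using hj
  rw [intMultichoose_natCast, Nat.multichoose_eq, ← Nat.cast_add, Int.toNat_natCast,
    Nat.add_right_comm, Nat.add_sub_cancel, Nat.choose_symm_add]

def stepScore : Bool → Bool → ℤ
  | true, true => 1
  | true, false => -1
  | false, _ => 0

theorem scoreSeq_succ_s9 (m : ℕ) (x : Fin (m + 1) → Bool) :
    scoreSeq (m + 1) x = ∑ i : Fin m, stepScore (x i.castSucc) (x i.succ) := by
  rw [scoreSeq, card_filter, card_filter]
  push_cast
  rw [← sum_sub_distrib]
  refine sum_congr rfl fun i _ => ?_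
  change _ = stepScore (x ⟨i, _⟩) (x ⟨i + 1, _⟩)
  cases x ⟨i, _⟩ <;> cases x ⟨i + 1, _⟩ <;> rfl

theorem scoreSeq_snoc_s9 (m : ℕ) (y : Fin (m + 1) → Bool) (b : Bool) :
    scoreSeq (m + 2) (Fin.snoc y b) = scoreSeq (m + 1) y + stepScore (y (Fin.last m)) b := by
  rw [scoreSeq_succ_s9, scoreSeq_succ_s9, Fin.sum_univ_castSucc]
  simp only [Fin.succ_castSucc, Fin.snoc_castSucc, Fin.succ_last, Fin.snoc_last]

def lastCount (b : Bool) (n : ℕ) (s : ℤ) : ℕ :=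
  #{x : Fin n → Bool | (∀ i : Fin n, (i : ℕ) = n - 1 → x i = b) ∧ scoreSeq n x = s}

theorem lastCount_succ (b : Bool) (m : ℕ) (s : ℤ) :
    lastCount b (m + 1) s =
      #{x : Fin (m + 1) → Bool | x (Fin.last m) = b ∧ scoreSeq (m + 1) x = s} := by
  refine congrArg card (filter_congr fun x _ => and_congr_left' ?_)
  exact ⟨fun h => h _ rfl, fun h i hi => (Fin.ext hi : i = Fin.last m) ▸ h⟩

theorem lastCount_one (b : Bool) (s : ℤ) : lastCount b 1 s = if s = 0 then 1 else 0 := by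
  rw [lastCount_succ]
  obtain rfl | hs := eq_or_ne s 0
  · cases b <;> rfl
  · simp [scoreSeq_succ_s9, hs, eq_comm (a := (0 : ℤ))]

theorem lastCount_succ_succ (b : Bool) (m : ℕ) (s : ℤ) :
    lastCount b (m + 2) s = ∑ c : Bool, lastCount c (m + 1) (s - stepScore c b) := by
  simp only [lastCount_succ, card_filter]
  rw [sum_comm, ← (Fin.snocEquiv fun _ : Fin (m + 2) => Bool).sum_comp,
    Fintype.sum_prod_type_right]
  refine sum_congr rfl fun y _ => ?_
  simp only [Fin.snocEquiv, Equiv.coe_fn_mk, Fin.snoc_last, scoreSeq_snoc_s9, Fintype.sum_bool]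
  cases y (Fin.last m) <;> cases b <;>
    simp only [stepScore, Bool.false_eq_true, Bool.true_eq_false, true_and, false_and] <;>
    split_ifs <;> omega

/- Run decomposition: a sequence ending in heads with `k + 1` runs of heads has `k` pairs
`(1,0)` and hence `j = k + s` pairs `(1,1)`; the `j` heads beyond the first of each run are spread
over the `k + 1` runs, and the `n - 1 - 3k - s` tails beyond the minimum over the `k + 1` gaps
before the runs (the first may be empty). A sequence ending in tails with `k` runs of heads is
counted the same way in `tailsClosed`. -/
def headsClosed (n : ℕ) (s : ℤ) : ℕ :=
  ∑ k ∈ range (n + 1),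
    intMultichoose (k + 1) (k + s) * intMultichoose (k + 1) (n - 1 - 3 * k - s)

def tailsClosed (n : ℕ) (s : ℤ) : ℕ :=
  ∑ k ∈ range (n + 1), intMultichoose k (k + s) * intMultichoose (k + 1) (n - 3 * k - s)

theorem headsClosed_one (s : ℤ) : headsClosed 1 s = if s = 0 then 1 else 0 := by
  rw [headsClosed, sum_range_succ, intMultichoose_mul_eq_zero (by omega), sum_range_one]
  simp only [Nat.cast_zero, Nat.cast_one, zero_add, mul_zero, add_zero, sub_self, zero_sub,
    intMultichoose_one]
  split_ifs <;> omega

theorem tailsClosed_one (s : ℤ) : tailsClosed 1 s = if s = 0 then 1 else 0 := by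
  rw [tailsClosed, sum_range_succ, intMultichoose_mul_eq_zero (by omega), sum_range_one]
  simp only [Nat.cast_zero, Nat.cast_one, zero_add, mul_zero, sub_zero, add_zero,
    intMultichoose_one, intMultichoose_zero]
  split_ifs <;> omega

theorem headsClosed_succ (n : ℕ) (s : ℤ) :
    headsClosed (n + 1) s = headsClosed n (s - 1) + tailsClosed n s := by
  rw [headsClosed, sum_range_succ, intMultichoose_mul_eq_zero (by omega), add_zero,
    headsClosed, tailsClosed, ← sum_add_distrib]
  refine sum_congr rfl fun k _ => ?_
  rw [intMultichoose_succ k (k + s), add_mul]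
  congr 3 <;> push_cast <;> ring

theorem tailsClosed_succ (n : ℕ) (s : ℤ) :
    tailsClosed (n + 1) s = headsClosed n (s + 1) + tailsClosed n s := by
  have hpascal (k : ℕ) :
      intMultichoose k (k + s) * intMultichoose (k + 1) ((n + 1 : ℕ) - 3 * k - s) =
        intMultichoose k (k + s) * intMultichoose (k + 1) (n - 3 * k - s) +
          intMultichoose k (k + s) * intMultichoose k (n + 1 - 3 * k - s) := by
    rw [intMultichoose_succ k, ← mul_add]
    congr 3
    push_cast
    ring
  have htails : ∑ k ∈ range (n + 2),
      intMultichoose k (k + s) * intMultichoose (k + 1) (n - 3 * k - s) = tailsClosed n s := by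
    rw [sum_range_succ, intMultichoose_mul_eq_zero (by omega), add_zero, tailsClosed]
  have hheads : ∑ k ∈ range (n + 2),
      intMultichoose k (k + s) * intMultichoose k (n + 1 - 3 * k - s) = headsClosed n (s + 1) := by
    have hzero : intMultichoose 0 s * intMultichoose 0 (n + 1 - s) = 0 := by
      simp only [intMultichoose_zero]
      split_ifs <;> omega
    rw [sum_range_succ', Nat.cast_zero, zero_add, mul_zero, sub_zero, hzero, add_zero,
      headsClosed]
    refine sum_congr rfl fun k _ => ?_
    congr 2 <;> push_cast <;> ring
  rw [tailsClosed, sum_congr rfl fun k _ => hpascal k, sum_add_distrib, htails, hheads, add_comm]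

theorem lastCount_eq_closed {n : ℕ} (hn : 1 ≤ n) :
    (∀ s, lastCount true n s = headsClosed n s) ∧
      ∀ s, lastCount false n s = tailsClosed n s := by
  induction n, hn using Nat.le_induction with
  | base =>
    exact ⟨fun s => (lastCount_one true s).trans (headsClosed_one s).symm,
      fun s => (lastCount_one false s).trans (tailsClosed_one s).symm⟩
  | succ n hn ih =>
    obtain ⟨m, rfl⟩ := Nat.exists_eq_add_of_le' hn
    refine ⟨fun s => ?_, fun s => ?_⟩
    · rw [lastCount_succ_succ, Fintype.sum_bool, ih.1, ih.2]
      simpa [stepScore] using (headsClosed_succ (m + 1) s).symm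
    · rw [lastCount_succ_succ, Fintype.sum_bool, ih.1, ih.2]
      simpa [stepScore] using (tailsClosed_succ (m + 1) s).symm

theorem headsClosed_eq_sum_choose (n : ℕ) (s : ℤ) (hs : s ≤ n - 1) :
    headsClosed n s = ∑ k ∈ Icc ((-s).toNat) (((n : ℤ) - s - 1).toNat / 3),
      Nat.choose (2 * (k : ℤ) + s).toNat k *
        Nat.choose (((n : ℤ) - s - 1).toNat - 2 * k) k := by
  symm
  refine sum_subset_zero_on_sdiff (fun k hk => ?_) (fun k hk => ?_) (fun k hk => ?_)
  · simp only [mem_Icc, mem_range] at hk ⊢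
    omega
  · simp only [mem_sdiff, mem_Icc, mem_range] at hk
    rcases lt_or_ge (k + s) 0 with h | h
    · rw [intMultichoose_of_neg h, zero_mul]
    · rw [intMultichoose_of_neg (by omega : (n : ℤ) - 1 - 3 * k - s < 0), mul_zero]
  · simp only [mem_Icc] at hk
    rw [intMultichoose_succ_eq_choose k (by omega), intMultichoose_succ_eq_choose k (by omega)]
    congr 2 <;> omega

theorem H_formula_general (n : ℕ) (hn : 1 ≤ n) (s : ℤ)
    (hs2 : s ≤ (n : ℤ) - 1) :
    Hcnt n s = ∑ k ∈ Finset.Icc ((-s).toNat) (((n : ℤ) - s - 1).toNat / 3),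
      Nat.choose (2 * (k : ℤ) + s).toNat k *
        Nat.choose (((n : ℤ) - s - 1).toNat - 2 * k) k := by
  rw [← headsClosed_eq_sum_choose n s hs2]
  exact (lastCount_eq_closed hn).1 s

/-- Theorem 2, formula (4.1): for `n ≥ 1` and integer `s` with
`−⌊(n−1)/2⌋ ≤ s ≤ n−1`,
`H_s(n) = ∑_{k = max(0,−s)}^{⌊(n−s−1)/3⌋} C(2k+s, k) · C(n−s−1−2k, k)`. -/
theorem H_formula (n : ℕ) (hn : 1 ≤ n) (s : ℤ)
    (hs1 : -(((n - 1) / 2 : ℕ) : ℤ) ≤ s) (hs2 : s ≤ (n : ℤ) - 1) :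
    Hcnt n s = ∑ k ∈ Finset.Icc ((-s).toNat) (((n : ℤ) - s - 1).toNat / 3),
      Nat.choose (2 * (k : ℤ) + s).toNat k *
        Nat.choose (((n : ℤ) - s - 1).toNat - 2 * k) k :=
  H_formula_general n hn s hs2
end

section
/- For every binary sequence x of length n ≥ 1, the score satisfies −⌊n/2⌋ ≤ S(x) ≤ n−1; moreover if x ends in 1 then S(x) ≥ −⌊(n−1)/2⌋. -/
/-! Each consecutive pair scores at most `1`, which gives the upper bound. A pair `(1,0)` scores
`-1` but leaves a `0` behind, so the next pair scores `0`: negative pairs are never adjacent, and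
none is last when the sequence ends in `1`. As an induction invariant this reads
`-⌊(m + [g m = 0]) / 2⌋ ≤ ∑_{i<m} pairScore (g i) (g (i+1))`. -/

open Finset

def pairScore (a b : Bool) : ℤ := if a then (if b then 1 else -1) else 0

lemma pairScore_le_one (a b : Bool) : pairScore a b ≤ 1 := by
  cases a <;> cases b <;> decide

lemma scoreSeq_eq_sum_pairScore (n : ℕ) (g : ℕ → Bool) :
    scoreSeq n (fun i => g i) = ∑ i ∈ range (n - 1), pairScore (g i) (g (i + 1)) := by
  rw [scoreSeq, card_filter, card_filter, ← Fin.sum_univ_eq_sum_range]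
  push_cast
  rw [← sum_sub_distrib]
  refine sum_congr rfl fun i _ => ?_
  cases g i <;> cases g (i + 1) <;> rfl

lemma sum_pairScore_le (g : ℕ → Bool) (m : ℕ) :
    ∑ i ∈ range m, pairScore (g i) (g (i + 1)) ≤ m := by
  simpa using sum_le_card_nsmul (range m) _ 1 fun i _ => pairScore_le_one (g i) (g (i + 1))

lemma neg_le_sum_pairScore (g : ℕ → Bool) (m : ℕ) :
    -(((m + (!g m).toNat) / 2 : ℕ) : ℤ) ≤ ∑ i ∈ range m, pairScore (g i) (g (i + 1)) := by
  induction m with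
  | zero => cases g 0 <;> simp
  | succ m ih =>
    rw [sum_range_succ]
    cases hm : g m <;> cases g (m + 1) <;>
      simp only [hm, pairScore, Bool.not_false, Bool.not_true, Bool.toNat_true,
        Bool.toNat_false] at ih ⊢ <;> push_cast at ih ⊢ <;> omega

/-- For every binary sequence `x` of length `n ≥ 1`, the score satisfies
`−⌊n/2⌋ ≤ S(x) ≤ n−1`; moreover if `x` ends in 1 then `S(x) ≥ −⌊(n−1)/2⌋`. -/
theorem score_range (n : ℕ) (hn : 1 ≤ n) (x : Fin n → Bool) :
    -((n / 2 : ℕ) : ℤ) ≤ scoreSeq n x ∧ scoreSeq n x ≤ (n : ℤ) - 1 ∧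
      (x ⟨n - 1, by omega⟩ = true → -(((n - 1) / 2 : ℕ) : ℤ) ≤ scoreSeq n x) := by
  obtain ⟨g, rfl⟩ : ∃ g : ℕ → Bool, x = fun i : Fin n => g i :=
    ⟨fun i => if h : i < n then x ⟨i, h⟩ else false, funext fun i => by simp [i.isLt]⟩
  have hlower := neg_le_sum_pairScore g (n - 1)
  have hupper := sum_pairScore_le g (n - 1)
  rw [scoreSeq_eq_sum_pairScore]
  refine ⟨?_, by omega, fun (hend : g (n - 1) = true) => ?_⟩
  · have := Bool.toNat_le (!g (n - 1))
    omega
  · simpa [hend] using hlower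
end
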